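/- arXiv:2603.17755 — 3 statements merged into one kernel-verified Lean document; each statement's English description precedes it below -/
import Mathlib

section
/- Let (H,w) be a weighted graph, let v ∈ V(H), let μ be a fractional matching in H, and let γ ≥ 0. Then there is a γ-skew-matching σ in H↔ such that σ ⊴ μ, W(σ) ≥ deg_w(v,μ), and the anchor of σ fits in the w-neighbourhood of v. -/
attribute [local instance] Classical.propDecidable

namespace SkewStmt

variable {V : Type*} [Fintype V]

/-- `w` is the weight function of a weighted digraph on `G`: it assigns a nonnegative
real to every ordered pair and vanishes on non-adjacent pairs (weights need not be
symmetric). -/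
def IsDiWeight (G : SimpleGraph V) (w : V → V → ℝ) : Prop :=
  (∀ u v, 0 ≤ w u v) ∧ ∀ u v, ¬ G.Adj u v → w u v = 0

/-- `w` is the weight function of a weighted graph on `G`: nonnegative, vanishing on
non-adjacent pairs, and symmetric. -/
def IsWeight (G : SimpleGraph V) (w : V → V → ℝ) : Prop :=
  IsDiWeight G w ∧ ∀ u v, w u v = w v u

/-- `μ` is a fractional matching in `G`, encoded as a symmetric function on ordered
pairs with values in `[0,1]`, vanishing off edges, with vertex weights at most `1`. -/
def IsFrac (G : SimpleGraph V) (μ : V → V → ℝ) : Prop :=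
  (∀ u v, μ u v = μ v u) ∧ (∀ u v, 0 ≤ μ u v) ∧ (∀ u v, μ u v ≤ 1) ∧
    (∀ u v, ¬ G.Adj u v → μ u v = 0) ∧ ∀ u, ∑ v, μ u v ≤ 1

/-- Vertex weight `μ(u)` of a fractional matching. -/
noncomputable def mv (μ : V → V → ℝ) (u : V) : ℝ := ∑ v, μ u v

/-- Weight `W(μ)` of a fractional matching: the sum over the (undirected) edges,
i.e. half of the sum over all ordered pairs. -/
noncomputable def mweight (μ : V → V → ℝ) : ℝ := (∑ u, ∑ v, μ u v) / 2

/-- `σ` is a `γ`-skew oriented fractional matching in the associated digraph `G↔`: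
a function on oriented edges with values in `[0,1]`, vanishing off edges, such that
`∑_{v ∈ N(u)} (σ(u,v)/(1+γ) + γ·σ(v,u)/(1+γ)) ≤ 1` for every vertex `u`. -/
def IsSkew (G : SimpleGraph V) (γ : ℝ) (σ : V → V → ℝ) : Prop :=
  (∀ u v, 0 ≤ σ u v) ∧ (∀ u v, σ u v ≤ 1) ∧ (∀ u v, ¬ G.Adj u v → σ u v = 0) ∧
    ∀ u, ∑ v, (σ u v / (1 + γ) + γ * σ v u / (1 + γ)) ≤ 1

/-- `σ¹(u) = (1/(1+γ)) ∑_v σ(u,v)`. -/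
noncomputable def s1 (γ : ℝ) (σ : V → V → ℝ) (u : V) : ℝ := (∑ v, σ u v) / (1 + γ)

/-- `σ²(u) = (γ/(1+γ)) ∑_v σ(v,u)`. -/
noncomputable def s2 (γ : ℝ) (σ : V → V → ℝ) (u : V) : ℝ := γ * (∑ v, σ v u) / (1 + γ)

/-- `σ(u) = σ¹(u) + σ²(u)`, the weight of a skew-matching on a vertex. -/
noncomputable def sv (γ : ℝ) (σ : V → V → ℝ) (u : V) : ℝ := s1 γ σ u + s2 γ σ u

/-- Weight `W(σ)` of a skew-matching: the sum over all oriented edges. -/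
noncomputable def skweight (σ : V → V → ℝ) : ℝ := ∑ u, ∑ v, σ u v

/-- The anchor of `σ` fits in the `w`-neighbourhood of `u`: `σ¹(v) ≤ w(u,v)` for all `v`. -/
def AnchorFits (w : V → V → ℝ) (γ : ℝ) (σ : V → V → ℝ) (u : V) : Prop :=
  ∀ v, s1 γ σ v ≤ w u v

/-- The anchor `𝒜(σ) = {v : σ¹(v) > 0}` of `σ` is contained in `U`. -/
def AnchorSub (γ : ℝ) (σ : V → V → ℝ) (U : Finset V) : Prop :=
  ∀ v, 0 < s1 γ σ v → v ∈ U

/-- `(σA, σB)` is a `(γA,γB)`-skew-matching pair anchored in the oriented edge `(c,d)`: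
`σA`, `σB` are disjoint skew-matchings with the respective skews, the anchor of `σA`
fits in the `w`-neighbourhood of `c`, the anchor of `σB` fits in the
`w`-neighbourhood of `d`, and `max{w(c,x),w(d,x)} ≥ σA¹(x)+σB¹(x)` for every common
neighbour `x` of `c` and `d`. -/
def IsPairAnchored (G : SimpleGraph V) (w : V → V → ℝ) (γA γB : ℝ)
    (σA σB : V → V → ℝ) (c d : V) : Prop :=
  IsSkew G γA σA ∧ IsSkew G γB σB ∧
    (∀ u, sv γA σA u + sv γB σB u ≤ 1) ∧
    AnchorFits w γA σA c ∧ AnchorFits w γB σB d ∧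
    ∀ x, G.Adj c x → G.Adj d x → s1 γA σA x + s1 γB σB x ≤ max (w c x) (w d x)

/-- `σ ⊴ μ` for a `γ`-skew-matching `σ` and a fractional matching `μ`. -/
def Dom (γ : ℝ) (σ μ : V → V → ℝ) : Prop :=
  ∀ x y, 0 < σ x y + σ y x → (σ x y + γ * σ y x) / (1 + γ) ≤ μ x y

/-- `σA + σB ⊴ μ` for skew-matchings `σA, σB` with skews `γA, γB` and a fractional
matching `μ`. -/
def Dom2 (γA γB : ℝ) (σA σB μ : V → V → ℝ) : Prop :=
  ∀ x y, 0 < σA x y + σA y x + σB x y + σB y x →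
    (σA x y + γA * σA y x) / (1 + γA) + (σB x y + γB * σB y x) / (1 + γB) ≤ μ x y

/-- Saturation `deg_w(u, ν) = ∑_v min{ν(v), w(u,v)}` of the neighbourhood of `u` by an
object with vertex weights `f`. -/
noncomputable def satdeg (w : V → V → ℝ) (u : V) (f : V → ℝ) : ℝ := ∑ v, min (f v) (w u v)

/-- The fractional matching `μ` runs between the disjoint sets `U` and `W`. -/
def RunsBetween (μ : V → V → ℝ) (U W : Finset V) : Prop :=
  ∀ x y, 0 < μ x y → (x ∈ U ∧ y ∈ W) ∨ (x ∈ W ∧ y ∈ U)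

/-- `σ'` (a `γ'`-skew-matching) is a skew sub-matching of `σ` (a `γ`-skew-matching). -/
def SkewLe (γ' γ : ℝ) (σ' σ : V → V → ℝ) : Prop :=
  ∀ u v, σ' u v / (1 + γ') ≤ σ u v / (1 + γ) ∧
    γ' * σ' u v / (1 + γ') ≤ γ * σ u v / (1 + γ)

end SkewStmt

open SkewStmt

/-! Take `σ(x,y) = t(x) μ(xy)` with `t(x) = min{μ(x), w(v,x)} / μ(x) ∈ [0,1]`. Since both
`t(x), t(y) ≤ 1`, the `(1, γ)`-weighted average of `σ(x,y)` and `σ(y,x)` is at most `μ(xy)`,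
which gives the skew-matching constraints and `σ ⊴ μ`. Summing the rows, `W(σ)` is exactly
`deg_w(v, μ)`, and `σ¹(x) = min{μ(x), w(v,x)} / (1+γ) ≤ w(v,x)`. -/

namespace SkewStmt

variable {V : Type*} [Fintype V]

def rowScale (t : V → ℝ) (μ : V → V → ℝ) : V → V → ℝ := fun x y => t x * μ x y

lemma skew_combination_le {a b m γ : ℝ} (ha : a ≤ 1) (hb : b ≤ 1) (hm : 0 ≤ m)
    (hγ : 0 ≤ γ) : (a * m + γ * (b * m)) / (1 + γ) ≤ m := by
  rw [div_le_iff₀ (by linarith)]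
  linarith [mul_le_of_le_one_left hm ha,
    mul_le_mul_of_nonneg_left (mul_le_of_le_one_left hm hb) hγ]

section RowScale

variable {G : SimpleGraph V} {μ : V → V → ℝ} {t : V → ℝ} {γ : ℝ}

lemma isSkew_rowScale (hμ : IsFrac G μ) (ht₀ : ∀ x, 0 ≤ t x) (ht₁ : ∀ x, t x ≤ 1)
    (hγ : 0 ≤ γ) : IsSkew G γ (rowScale t μ) := by
  obtain ⟨hsymm, hnn, hle1, hzero, hdeg⟩ := hμ
  refine ⟨fun x y => mul_nonneg (ht₀ x) (hnn x y),
    fun x y => mul_le_one₀ (ht₁ x) (hnn x y) (hle1 x y),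
    fun x y h => by simp [rowScale, hzero x y h], fun u => ?_⟩
  calc ∑ y, (rowScale t μ u y / (1 + γ) + γ * rowScale t μ y u / (1 + γ))
      ≤ ∑ y, μ u y := Finset.sum_le_sum fun y _ => by
        rw [← add_div, rowScale, rowScale, hsymm y u]
        exact skew_combination_le (ht₁ u) (ht₁ y) (hnn u y) hγ
    _ ≤ 1 := hdeg u

lemma dom_rowScale (hμ : IsFrac G μ) (ht₁ : ∀ x, t x ≤ 1) (hγ : 0 ≤ γ) :
    Dom γ (rowScale t μ) μ := fun x y _ => by
  rw [rowScale, rowScale, hμ.1 y x]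
  exact skew_combination_le (ht₁ x) (ht₁ y) (hμ.2.1 x y) hγ

lemma skweight_rowScale : skweight (rowScale t μ) = ∑ x, t x * mv μ x := by
  simp only [skweight, rowScale, mv, Finset.mul_sum]

lemma s1_rowScale (x : V) : s1 γ (rowScale t μ) x = t x * mv μ x / (1 + γ) := by
  simp only [s1, rowScale, mv, Finset.mul_sum]

end RowScale

section SaturationRatio

variable {G : SimpleGraph V} {w μ : V → V → ℝ} {v : V}

/-- Equal to `0` when `μ(x) = 0`, by the convention `a / 0 = 0`. -/
noncomputable def saturationRatio (w μ : V → V → ℝ) (v x : V) : ℝ :=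
  min (mv μ x) (w v x) / mv μ x

lemma mv_nonneg (hμ : IsFrac G μ) (x : V) : 0 ≤ mv μ x :=
  Finset.sum_nonneg fun y _ => hμ.2.1 x y

lemma min_mv_nonneg (hw : IsWeight G w) (hμ : IsFrac G μ) (x : V) :
    0 ≤ min (mv μ x) (w v x) :=
  le_min (mv_nonneg hμ x) (hw.1.1 v x)

lemma saturationRatio_nonneg (hw : IsWeight G w) (hμ : IsFrac G μ) (x : V) :
    0 ≤ saturationRatio w μ v x :=
  div_nonneg (min_mv_nonneg hw hμ x) (mv_nonneg hμ x)

lemma saturationRatio_le_one (hμ : IsFrac G μ) (x : V) : saturationRatio w μ v x ≤ 1 :=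
  div_le_one_of_le₀ (min_le_left _ _) (mv_nonneg hμ x)

lemma saturationRatio_mul_mv (hw : IsWeight G w) (x : V) :
    saturationRatio w μ v x * mv μ x = min (mv μ x) (w v x) :=
  div_mul_cancel_of_imp fun h => by rw [h, min_eq_left (hw.1.1 v x)]

end SaturationRatio

end SkewStmt

/-- Combination Lemma. -/
theorem combination_lemma {V : Type*} [Fintype V]
    (H : SimpleGraph V) (w : V → V → ℝ) (hw : IsWeight H w)
    (v : V) (μ : V → V → ℝ) (hμ : IsFrac H μ) (γ : ℝ) (hγ : 0 ≤ γ) :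
    ∃ σ : V → V → ℝ,
      IsSkew H γ σ ∧ Dom γ σ μ ∧
      satdeg w v (mv μ) ≤ skweight σ ∧
      AnchorFits w γ σ v := by
  have ht₀ := saturationRatio_nonneg (v := v) hw hμ
  have ht₁ := saturationRatio_le_one (w := w) (v := v) hμ
  refine ⟨rowScale (saturationRatio w μ v) μ, isSkew_rowScale hμ ht₀ ht₁ hγ,
    dom_rowScale hμ ht₁ hγ, ?_, fun x => ?_⟩
  · simp only [skweight_rowScale, saturationRatio_mul_mv hw, satdeg, le_refl]
  · rw [s1_rowScale, saturationRatio_mul_mv hw]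
    calc min (mv μ x) (w v x) / (1 + γ) ≤ min (mv μ x) (w v x) :=
          div_le_self (min_mv_nonneg hw hμ x) (by linarith)
      _ ≤ w v x := min_le_right _ _
end

section
/- Let (H,w) be a weighted graph, let γ_A > 0 and γ_B ≥ 1, let u ∈ V(H), and let σ_B be a γ_B-skew-matching in H↔ whose anchor fits in the w-neighbourhood of u. Then there is a γ_A-skew-matching σ_A in H↔ such that σ_A ≤ σ_B (σ_A is a skew sub-matching of σ_B), W(σ_A) = ((1 + min{γ_A, γ_A⁻¹})/(1 + γ_B))·W(σ_B), and the anchor of σ_A fits in the w-neighbourhood of u. -/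
attribute [local instance] Classical.propDecidable

open SkewStmt

/-!
Scale `σB` by the constant `c = (1 + min γA γA⁻¹) / (1 + γB)`. Since
`(1 + min γ γ⁻¹) * max 1 γ = 1 + γ`, the scaled function, read with skew `γA`, puts at most
the mass of `σB` on both the tail and the head of every oriented edge; being a skew
sub-matching of `σB`, it inherits the degree constraints and the fitting anchor from `σB`.
-/

namespace SkewStmt

theorem one_add_min_inv_mul_max {γ : ℝ} (hγ : 0 < γ) :
    (1 + min γ γ⁻¹) * max 1 γ = 1 + γ := by
  rcases le_total γ 1 with h | h
  · rw [min_eq_left (one_le_inv₀ hγ |>.mpr h |> h.trans), max_eq_left h, mul_one]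
  · rw [min_eq_right ((inv_le_one₀ hγ).mpr h |>.trans h), max_eq_right h, add_mul,
      inv_mul_cancel₀ hγ.ne', one_mul, add_comm]

theorem skewLe_const_mul {V : Type*} {γ' γ c : ℝ} {σ : V → V → ℝ} (hσ : ∀ u v, 0 ≤ σ u v)
    (h₁ : c / (1 + γ') ≤ 1 / (1 + γ)) (h₂ : γ' * c / (1 + γ') ≤ γ / (1 + γ)) :
    SkewLe γ' γ (fun u v => c * σ u v) σ := fun u v => by
  constructor
  · calc c * σ u v / (1 + γ') = σ u v * (c / (1 + γ')) := by ring
      _ ≤ σ u v * (1 / (1 + γ)) := mul_le_mul_of_nonneg_left h₁ (hσ u v)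
      _ = σ u v / (1 + γ) := by ring
  · calc γ' * (c * σ u v) / (1 + γ') = σ u v * (γ' * c / (1 + γ')) := by ring
      _ ≤ σ u v * (γ / (1 + γ)) := mul_le_mul_of_nonneg_left h₂ (hσ u v)
      _ = γ * σ u v / (1 + γ) := by ring

variable {V : Type*} [Fintype V]

theorem skweight_const_mul (c : ℝ) (σ : V → V → ℝ) :
    skweight (fun u v => c * σ u v) = c * skweight σ := by
  simp only [skweight, Finset.mul_sum]

theorem IsSkew.of_skewLe {G : SimpleGraph V} {γ' γ : ℝ} {σ' σ : V → V → ℝ}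
    (hσ : IsSkew G γ σ) (hγ' : 0 < 1 + γ') (h₀ : ∀ u v, 0 ≤ σ' u v)
    (h₁ : ∀ u v, σ' u v ≤ 1) (hle : SkewLe γ' γ σ' σ) : IsSkew G γ' σ' := by
  obtain ⟨-, -, hoff, hdeg⟩ := hσ
  refine ⟨h₀, h₁, fun u v huv => le_antisymm ?_ (h₀ u v), fun u => ?_⟩
  · have := (hle u v).1
    rw [hoff u v huv, zero_div, div_le_iff₀ hγ', zero_mul] at this
    exact this
  · exact (Finset.sum_le_sum fun v _ => add_le_add (hle u v).1 (hle v u).2).trans (hdeg u)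

theorem s1_le_of_skewLe {γ' γ : ℝ} {σ' σ : V → V → ℝ} (hle : SkewLe γ' γ σ' σ) (v : V) :
    s1 γ' σ' v ≤ s1 γ σ v := by
  simp only [s1, Finset.sum_div]
  exact Finset.sum_le_sum fun x _ => (hle v x).1

theorem AnchorFits.of_skewLe {w : V → V → ℝ} {γ' γ : ℝ} {σ' σ : V → V → ℝ} {u : V}
    (hfit : AnchorFits w γ σ u) (hle : SkewLe γ' γ σ' σ) : AnchorFits w γ' σ' u :=
  fun v => (s1_le_of_skewLe hle v).trans (hfit v)

end SkewStmt

theorem extending_out_skew_general {V : Type*} [Fintype V]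
    (H : SimpleGraph V) (w : V → V → ℝ)
    (γA γB : ℝ) (hγA : 0 < γA) (hγB : 1 ≤ γB) (u : V)
    (σB : V → V → ℝ) (hσB : IsSkew H γB σB) (hfit : AnchorFits w γB σB u) :
    ∃ σA : V → V → ℝ,
      IsSkew H γA σA ∧ SkewLe γA γB σA σB ∧
      skweight σA = (1 + min γA γA⁻¹) / (1 + γB) * skweight σB ∧
      AnchorFits w γA σA u := by
  set c := (1 + min γA γA⁻¹) / (1 + γB)
  have hA : 0 < 1 + γA := by linarith
  have hB : 0 < 1 + γB := by linarith
  have hmax := one_add_min_inv_mul_max hγA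
  have hm₁ : 1 + min γA γA⁻¹ ≤ 1 + γA := by nlinarith [le_max_left 1 γA]
  have hm₂ : γA * (1 + min γA γA⁻¹) ≤ 1 + γA := by nlinarith [le_max_right 1 γA]
  have hcB : c * (1 + γB) = 1 + min γA γA⁻¹ := div_mul_cancel₀ _ hB.ne'
  have hc₀ : 0 ≤ c := by positivity
  have hc₁ : c ≤ 1 := (div_le_one hB).mpr (by nlinarith [le_max_left 1 γA, le_max_right 1 γA])
  have hle : SkewLe γA γB (fun x y => c * σB x y) σB := by
    refine skewLe_const_mul hσB.1 ?_ ?_ <;> rw [div_le_div_iff₀ hA hB]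
    · linarith
    · nlinarith
  refine ⟨_, hσB.of_skewLe hA (fun x y => mul_nonneg hc₀ (hσB.1 x y)) (fun x y => ?_) hle,
    hle, skweight_const_mul c σB, hfit.of_skewLe hle⟩
  exact mul_le_one₀ hc₁ (hσB.1 x y) (hσB.2.1 x y)

/-- Extending-out skew-matching. -/
theorem extending_out_skew {V : Type*} [Fintype V]
    (H : SimpleGraph V) (w : V → V → ℝ) (hw : IsWeight H w)
    (γA γB : ℝ) (hγA : 0 < γA) (hγB : 1 ≤ γB) (u : V)
    (σB : V → V → ℝ) (hσB : IsSkew H γB σB) (hfit : AnchorFits w γB σB u) :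
    ∃ σA : V → V → ℝ,
      IsSkew H γA σA ∧ SkewLe γA γB σA σB ∧
      skweight σA = (1 + min γA γA⁻¹) / (1 + γB) * skweight σB ∧
      AnchorFits w γA σA u :=
  extending_out_skew_general H w γA γB hγA hγB u σB hσB hfit
end

section
/- Suppose 2ε ≤ 𝔡 ≤ 1/3 and ε < 𝔡²·η̃/8. Let (F,r,x) be a rooted shrub, let (X,Y) be an ε-regular pair in a graph G with d(X,Y) ≥ 𝔡 and |X| = |Y|, let U ⊆ X ∪ Y and P ⊆ X be disjoint sets, and let v ∈ X ∖ P. Assume: (i) |X ∩ U| ≥ η̃·|X| and |Y ∩ U| ≥ η̃·|X|; (ii) |P| ≥ 2ε·|X|; (iii) v has at least 2ε·|Y| neighbours in Y ∩ U; and (iv) |V(F)| ≤ ε·|X|. Then there is an embedding φ of F in G such that φ(r) = v, φ maps V(F) ∖ {x,r} into U, and, if the adventitious root x exists, φ(x) ∈ P. -/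
/-!
Embed `F` greedily, in order of distance from the root: vertices at even distance go to `X`, at
odd distance to `Y`. By ε-regularity at most `ε|X|` vertices of `X` have fewer than
`(d - ε)|Y ∩ U|` neighbours in `Y ∩ U`, and likewise for `Y` towards `X ∩ U` and towards `P`
(once the exceptional vertices are removed from `P`). Keeping all images off these exceptional
sets, the parent of each new vertex has at least `ε|X| ≥ |V(F)|` admissible neighbours, more than
the vertices already used. The parent of the adventitious root `x` also avoids the exceptional
set towards `P`, so `x` finds a neighbour in `P`, which no other vertex uses as `U ∩ P = ∅`.
-/

open Finset SimpleGraph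

lemma Finset.card_filter_le_card_filter_sdiff_add_card {α : Type*} [DecidableEq α]
    (T B : Finset α) (p : α → Prop) [DecidablePred p] :
    #{c ∈ T | p c} ≤ #{c ∈ T \ B | p c} + #B := by
  refine (card_le_card fun c hc => ?_).trans (card_union_le _ _)
  simp only [mem_union, mem_sdiff, mem_filter] at hc ⊢
  tauto

namespace SimpleGraph

variable {W V : Type*} {F : SimpleGraph W} {G : SimpleGraph V} {r p p' w : W} {v : V}
  {Good : W → V → Prop}

lemma Connected.exists_adj_dist_add_one (hF : F.Connected) (hw : w ≠ r) :
    ∃ p, F.Adj p w ∧ F.dist r p + 1 = F.dist r w := by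
  obtain ⟨q, hq⟩ := hF.exists_walk_length_eq_dist r w
  have hnil : ¬q.Nil := fun h => hw (h.eq).symm
  refine ⟨q.penultimate, q.adj_penultimate hnil, ?_⟩
  have hle : F.dist r q.penultimate ≤ q.length - 1 := q.length_dropLast ▸ dist_le _
  have hpos : 0 < F.dist r w := (hF.pos_dist_of_ne hw.symm)
  rcases (q.adj_penultimate hnil).diff_dist_adj (u := r) with h | h | h <;> omega

lemma IsTree.eq_of_adj_of_dist_add_one (hF : F.IsTree) (hp : F.Adj p w) (hp' : F.Adj p' w)
    (hd : F.dist r p + 1 = F.dist r w) (hd' : F.dist r p' + 1 = F.dist r w) : p = p' := by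
  obtain ⟨q, hq⟩ := hF.connected.exists_walk_length_eq_dist r p
  obtain ⟨q', hq'⟩ := hF.connected.exists_walk_length_eq_dist r p'
  have hpath : (q.concat hp).IsPath := (q.concat hp).isPath_of_length_eq_dist (by simp [hq, hd])
  have hpath' : (q'.concat hp').IsPath :=
    (q'.concat hp').isPath_of_length_eq_dist (by simp [hq', hd'])
  have hpaths := (hF.isAcyclic.subsingleton_path r w).elim ⟨_, hpath⟩ ⟨_, hpath'⟩
  exact (Walk.concat_inj (congrArg Subtype.val hpaths)).1

lemma exists_adj_mem_notMem [DecidableRel G.Adj] {a : V} {T S : Finset V} {n : ℕ}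
    (hS : #S < n) (hT : n ≤ #{c ∈ T | G.Adj a c}) : ∃ c, G.Adj a c ∧ c ∈ T ∧ c ∉ S := by
  obtain ⟨c, hc, hcS⟩ := exists_mem_notMem_of_card_lt_card (hS.trans_le hT)
  exact ⟨c, (mem_filter.1 hc).2, (mem_filter.1 hc).1, hcS⟩

section Greedy

variable (F G r v Good) in
structure IsGoodPartialEmbedding (s : Finset W) (φ : W → V) : Prop where
  root_mem : r ∈ s
  mem_of_adj : ∀ ⦃a b⦄, F.Adj a b → F.dist r a + 1 = F.dist r b → b ∈ s → a ∈ s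
  map_root : φ r = v
  injOn : Set.InjOn φ s
  map_adj : ∀ a ∈ s, ∀ b ∈ s, F.Adj a b → G.Adj (φ a) (φ b)
  good : ∀ a ∈ s, Good a (φ a)

lemma isGoodPartialEmbedding_singleton (hv : Good r v) :
    IsGoodPartialEmbedding F G r v Good {r} fun _ => v where
  root_mem := mem_singleton_self r
  mem_of_adj a b _ hd hb := by rw [mem_singleton.1 hb, dist_self] at hd; omega
  map_root := rfl
  injOn := by simp
  map_adj a ha b hb hab := by
    rw [mem_singleton.1 ha, mem_singleton.1 hb] at hab; exact absurd hab F.irrefl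
  good a ha := mem_singleton.1 ha ▸ hv

lemma IsGoodPartialEmbedding.insert_update [DecidableEq W] [DecidableEq V] {s : Finset W}
    {φ : W → V} {c : V} (hφ : IsGoodPartialEmbedding F G r v Good s φ) (hw : w ∉ s)
    (hparent : ∀ a, F.Adj a w → F.dist r a + 1 = F.dist r w → a ∈ s)
    (hnbr : ∀ b ∈ s, F.Adj w b → b = p) (hpc : G.Adj (φ p) c) (hcs : c ∉ s.image φ)
    (hwc : Good w c) :
    IsGoodPartialEmbedding F G r v Good (insert w s) (Function.update φ w c) := by
  have hupd : ∀ u ∈ s, Function.update φ w c u = φ u := fun u hu =>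
    Function.update_of_ne (ne_of_mem_of_not_mem hu hw) _ _
  refine ⟨mem_insert_of_mem hφ.root_mem, ?_, ?_, ?_, ?_, ?_⟩
  · intro a b hab hd hb
    rcases mem_insert.1 hb with rfl | hb
    · exact mem_insert_of_mem (hparent a hab hd)
    · exact mem_insert_of_mem (hφ.mem_of_adj hab hd hb)
  · rw [hupd r hφ.root_mem, hφ.map_root]
  · rw [coe_insert, Set.injOn_insert (by simpa using hw), Function.update_self]
    refine ⟨hφ.injOn.congr fun u hu => (hupd u hu).symm, ?_⟩
    rintro ⟨u, hu, hcu⟩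
    exact hcs (mem_image.2 ⟨u, hu, (hupd u hu).symm.trans hcu⟩)
  · intro a ha b hb hab
    rw [mem_insert] at ha hb
    rcases ha with rfl | ha <;> rcases hb with rfl | hb
    · exact absurd hab F.irrefl
    · rw [Function.update_self, hupd b hb, hnbr b hb hab]; exact hpc.symm
    · rw [Function.update_self, hupd a ha, hnbr a ha hab.symm]; exact hpc
    · rw [hupd a ha, hupd b hb]; exact hφ.map_adj a ha b hb hab
  · intro a ha
    rcases mem_insert.1 ha with rfl | ha
    · rwa [Function.update_self]
    · rw [hupd a ha]; exact hφ.good a ha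

variable [Fintype W]

variable (F G r Good) in
/-- `S` stands for the images of the vertices embedded so far. -/
def GreedyExtensible : Prop :=
  ∀ ⦃p w c⦄, F.Adj p w → F.dist r p + 1 = F.dist r w → Good p c →
    ∀ S : Finset V, #S < Fintype.card W → (∀ c' ∈ S, ∃ u ≠ w, Good u c') →
      ∃ c', G.Adj c c' ∧ Good w c' ∧ c' ∉ S

/-- The new vertex is one closest to the root outside `s`, so its only neighbour in `s` is its
parent. -/
lemma IsGoodPartialEmbedding.exists_insert [DecidableEq W] [DecidableEq V]
    (hF : F.IsTree) (hext : GreedyExtensible F G r Good) {s : Finset W} {φ : W → V}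
    (hφ : IsGoodPartialEmbedding F G r v Good s φ) (hs : s ≠ univ) :
    ∃ w ∉ s, ∃ ψ, IsGoodPartialEmbedding F G r v Good (insert w s) ψ := by
  obtain ⟨w, hw, hmin⟩ := sᶜ.exists_min_image (F.dist r) (by simpa [nonempty_iff_ne_empty])
  rw [mem_compl] at hw
  have mem_of_dist_lt : ∀ a, F.dist r a < F.dist r w → a ∈ s := fun a ha => by
    by_contra h; exact (hmin a (mem_compl.2 h)).not_gt ha
  have hwr : w ≠ r := by rintro rfl; exact hw hφ.root_mem
  obtain ⟨p, hpw, hpd⟩ := hF.connected.exists_adj_dist_add_one hwr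
  have hnbr : ∀ b ∈ s, F.Adj w b → b = p := fun b hb hwb => by
    rcases hF.dist_eq_dist_add_one_of_adj r hwb with h | h
    · exact hF.eq_of_adj_of_dist_add_one hwb.symm hpw h.symm hpd
    · exact absurd (hφ.mem_of_adj hwb h.symm hb) hw
  have hcard : #(s.image φ) < Fintype.card W :=
    card_image_le.trans_lt (card_lt_univ_of_notMem hw)
  obtain ⟨c, hpc, hwc, hcs⟩ :=
    hext hpw hpd (hφ.good p (mem_of_dist_lt p (by omega))) (s.image φ) hcard <| by
      simp only [mem_image, forall_exists_index, and_imp, forall_apply_eq_imp_iff₂]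
      exact fun u hu => ⟨u, ne_of_mem_of_not_mem hu hw, hφ.good u hu⟩
  exact ⟨w, hw, _,
    hφ.insert_update hw (fun a _ ha => mem_of_dist_lt a (by omega)) hnbr hpc hcs hwc⟩

theorem IsTree.exists_injective_hom_of_greedyExtensible (hF : F.IsTree)
    (hext : GreedyExtensible F G r Good) (hv : Good r v) :
    ∃ φ : F →g G, Function.Injective φ ∧ φ r = v ∧ ∀ w, Good w (φ w) := by
  classical
  suffices h : ∀ s φ, IsGoodPartialEmbedding F G r v Good s φ →
      ∃ ψ, IsGoodPartialEmbedding F G r v Good univ ψ by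
    obtain ⟨ψ, hψ⟩ := h _ _ (isGoodPartialEmbedding_singleton hv)
    exact ⟨⟨ψ, fun hab => hψ.map_adj _ (mem_univ _) _ (mem_univ _) hab⟩,
      fun a b hab => hψ.injOn (mem_univ a) (mem_univ b) hab, hψ.map_root,
      fun w => hψ.good w (mem_univ w)⟩
  intro s φ hφ
  induction hn : #sᶜ generalizing s φ with
  | zero =>
    rw [card_eq_zero, compl_eq_empty_iff] at hn
    exact ⟨φ, hn ▸ hφ⟩
  | succ n ih =>
    obtain ⟨w, hw, ψ, hψ⟩ := hφ.exists_insert hF hext (by rintro rfl; simp at hn)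
    refine ih _ ψ hψ ?_
    rw [card_compl, card_insert_of_notMem hw]
    rw [card_compl] at hn
    omega

end Greedy

section LowDegree

variable {𝕜 : Type*} [Field 𝕜] [LinearOrder 𝕜] [DecidableRel G.Adj] {X Y S : Finset V} {ε δ : 𝕜}

variable (G) in
def lowDegreeVerts (X S : Finset V) (δ : 𝕜) : Finset V :=
  {u ∈ X | (#{y ∈ S | G.Adj u y} : 𝕜) < δ * #S}

lemma le_card_filter_adj_of_notMem_lowDegreeVerts {u : V} (hu : u ∈ X)
    (hu' : u ∉ G.lowDegreeVerts X S δ) : δ * #S ≤ (#{y ∈ S | G.Adj u y} : 𝕜) := by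
  simpa [lowDegreeVerts, hu] using hu'

variable [IsStrictOrderedRing 𝕜]

lemma card_interedges_eq_sum_card_filter_adj (B S : Finset V) :
    #(G.interedges B S) = ∑ u ∈ B, #{y ∈ S | G.Adj u y} := by
  rw [interedges_def, card_filter, sum_product]
  exact sum_congr rfl fun u _ => (card_filter _ _).symm

lemma edgeDensity_lowDegreeVerts_lt (hB : (G.lowDegreeVerts X S δ).Nonempty) :
    (G.edgeDensity (G.lowDegreeVerts X S δ) S : 𝕜) < δ := by
  set B := G.lowDegreeVerts X S δ
  obtain ⟨u, hu⟩ := hB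
  have hlow : ∀ u ∈ B, (#{y ∈ S | G.Adj u y} : 𝕜) < δ * #S := fun u hu => (mem_filter.1 hu).2
  have hS : (0 : 𝕜) < #S := by
    by_contra! h
    have := hlow u hu
    simp_all
  have hsum : (#(G.interedges B S) : 𝕜) < #B * (δ * #S) := by
    rw [card_interedges_eq_sum_card_filter_adj, Nat.cast_sum, ← nsmul_eq_mul, ← sum_const]
    exact sum_lt_sum_of_nonempty ⟨u, hu⟩ hlow
  have hBpos : (0 : 𝕜) < #B := Nat.cast_pos.2 (card_pos.2 ⟨u, hu⟩)
  rw [edgeDensity_def, Rat.cast_div, Rat.cast_mul, Rat.cast_natCast, Rat.cast_natCast,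
    Rat.cast_natCast, div_lt_iff₀ (by positivity)]
  linarith

lemma le_card_filter_adj_sdiff_of_notMem_lowDegreeVerts {u : V} {B : Finset V} {n : ℕ}
    [DecidableEq V] (hu : u ∈ X) (hu' : u ∉ G.lowDegreeVerts X S δ) (h : (n : 𝕜) + #B ≤ δ * #S) :
    n ≤ #{y ∈ S \ B | G.Adj u y} := by
  have hdeg := le_card_filter_adj_of_notMem_lowDegreeVerts hu hu'
  have hsplit : (#{y ∈ S | G.Adj u y} : 𝕜) ≤ #{y ∈ S \ B | G.Adj u y} + #B := by
    exact_mod_cast card_filter_le_card_filter_sdiff_add_card S B (G.Adj u)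
  rw [← Nat.cast_le (α := 𝕜)]
  linarith

lemma exists_adj_of_notMem_lowDegreeVerts {u : V} (hu : u ∈ X) (hu' : u ∉ G.lowDegreeVerts X S δ)
    (hδ : 0 < δ) (hS : S.Nonempty) : ∃ y ∈ S, G.Adj u y := by
  have hpos : (0 : 𝕜) < #{y ∈ S | G.Adj u y} :=
    (mul_pos hδ (Nat.cast_pos.2 hS.card_pos)).trans_le
      (le_card_filter_adj_of_notMem_lowDegreeVerts hu hu')
  obtain ⟨y, hy⟩ := card_pos.1 (Nat.cast_pos.1 hpos)
  exact ⟨y, (mem_filter.1 hy).1, (mem_filter.1 hy).2⟩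

lemma IsUniform.card_lowDegreeVerts_le (hG : G.IsUniform ε X Y) (hS : S ⊆ Y)
    (hSY : #Y * ε ≤ #S) (hδ : δ ≤ G.edgeDensity X Y) :
    (#(G.lowDegreeVerts X S (δ - ε)) : 𝕜) ≤ #X * ε := by
  by_contra! h
  have hB : (G.lowDegreeVerts X S (δ - ε)).Nonempty := by
    rw [← card_pos, ← Nat.cast_pos (α := 𝕜)]
    exact lt_of_le_of_lt (mul_nonneg (Nat.cast_nonneg _) hG.pos.le) h
  have hclose := hG (s' := G.lowDegreeVerts X S (δ - ε)) (filter_subset _ X) hS h.le hSY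
  have := edgeDensity_lowDegreeVerts_lt hB
  linarith [(abs_lt.1 hclose).1]

end LowDegree

end SimpleGraph

section Shrub

variable {W V : Type*} [DecidableEq W] {F : SimpleGraph W} {r : W} {x? : Option W} {v : V}
  {A B B' P' : Finset V}

variable (F r x? v A B B' P') in
/-- An odd vertex at distance at least 3 from the root may be the parent of the adventitious
root, so it is sent to `B'`, whose vertices have neighbours in `P'`. -/
noncomputable def shrubTarget (w : W) : Finset V :=
  if w = r then {v} else if x? = some w then P' else if Even (F.dist r w) then A
  else if F.dist r w = 1 then B else B'

lemma shrubTarget_of_not_even (hx : ∀ x ∈ x?, Even (F.dist r x)) {p : W}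
    (hp : ¬Even (F.dist r p)) :
    shrubTarget F r x? v A B B' P' p = if F.dist r p = 1 then B else B' := by
  have hpr : p ≠ r := by rintro rfl; simp at hp
  rw [shrubTarget, if_neg hpr, if_neg fun h : x? = some p => hp (hx p h), if_neg hp]

variable [DecidableEq V]

lemma shrubTarget_subset (hB' : B' ⊆ B) {u : W} (hur : u ≠ r) (hux : x? ≠ some u) :
    shrubTarget F r x? v A B B' P' u ⊆ A ∪ B := by
  rw [shrubTarget, if_neg hur, if_neg hux]
  split_ifs
  · exact Finset.subset_union_left
  · exact Finset.subset_union_right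
  · exact hB'.trans Finset.subset_union_right

lemma shrubTarget_subset_of_even {p : W} (hp0 : F.dist r p ≠ 0) (hp : Even (F.dist r p)) :
    shrubTarget F r x? v A B B' P' p ⊆ A ∪ P' := by
  have hpr : p ≠ r := by rintro rfl; simp at hp0
  rw [shrubTarget, if_neg hpr]
  split_ifs
  · exact Finset.subset_union_right
  · exact Finset.subset_union_left

lemma disjoint_shrubTarget (hB' : B' ⊆ B) (hvP : v ∉ P') (hAP : Disjoint A P')
    (hBP : Disjoint B P') {u w : W} (hw : x? = some w) (huw : u ≠ w) :
    Disjoint (shrubTarget F r x? v A B B' P' u) P' := by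
  by_cases hur : u = r
  · rwa [shrubTarget, if_pos hur, disjoint_singleton_left]
  · have hux : x? ≠ some u := fun h => huw (Option.some_injective _ (h.symm.trans hw))
    exact (disjoint_union_left.2 ⟨hAP, hBP⟩).mono_left (shrubTarget_subset hB' hur hux)

variable {G : SimpleGraph V} [DecidableRel G.Adj]

lemma greedyExtensible_shrubTarget [Fintype W] (hF : F.IsTree)
    (hx : ∀ x ∈ x?, Even (F.dist r x) ∧ 4 ≤ F.dist r x)
    (hv : Fintype.card W ≤ #{c ∈ B | G.Adj v c})
    (hA : ∀ a ∈ A ∪ P', Fintype.card W ≤ #{c ∈ B' | G.Adj a c})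
    (hB : ∀ b ∈ B, Fintype.card W ≤ #{c ∈ A | G.Adj b c})
    (hB'P : ∀ b ∈ B', ∃ c ∈ P', G.Adj b c) (hB' : B' ⊆ B)
    (hvP : v ∉ P') (hAP : Disjoint A P') (hBP : Disjoint B P') :
    GreedyExtensible F G r fun w c => c ∈ shrubTarget F r x? v A B B' P' w := by
  intro p w c hpw hd hc S hS hSgood
  beta_reduce at hc hSgood ⊢
  have hx_even : ∀ x ∈ x?, Even (F.dist r x) := fun x h => (hx x h).1
  have hwr : w ≠ r := by rintro rfl; simp at hd
  by_cases hwx : x? = some w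
  · obtain ⟨hw_even, hw4⟩ := hx w hwx
    have hp_odd : ¬Even (F.dist r p) := by rwa [← hd, Nat.even_add_one] at hw_even
    rw [shrubTarget_of_not_even hx_even hp_odd, if_neg (by omega)] at hc
    obtain ⟨c', hc'P, hcc'⟩ := hB'P c hc
    refine ⟨c', hcc', by rwa [shrubTarget, if_neg hwr, if_pos hwx], fun hc'S => ?_⟩
    obtain ⟨u, huw, hu⟩ := hSgood c' hc'S
    exact disjoint_left.1 (disjoint_shrubTarget hB' hvP hAP hBP hwx huw) hu hc'P
  rw [shrubTarget, if_neg hwr, if_neg hwx]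
  split_ifs with hw_even hw1
  · have hp_odd : ¬Even (F.dist r p) := by rwa [← hd, Nat.even_add_one] at hw_even
    rw [shrubTarget_of_not_even hx_even hp_odd] at hc
    have hcB : c ∈ B := by split_ifs at hc; exacts [hc, hB' hc]
    exact exists_adj_mem_notMem hS (hB c hcB)
  · have hp : p = r := by
      rwa [hw1, Nat.add_eq_right, hF.connected.dist_eq_zero_iff, eq_comm] at hd
    rw [hp, shrubTarget, if_pos rfl, mem_singleton] at hc
    exact exists_adj_mem_notMem hS (hc ▸ hv)
  · have hp_even : Even (F.dist r p) := by rwa [← hd, Nat.even_add_one, not_not] at hw_even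
    exact exists_adj_mem_notMem hS (hA c (shrubTarget_subset_of_even (by omega) hp_even hc))

theorem SimpleGraph.IsTree.exists_shrub_embedding [Fintype W] (hF : F.IsTree)
    (hx : ∀ x ∈ x?, Even (F.dist r x) ∧ 4 ≤ F.dist r x)
    (hv : Fintype.card W ≤ #{c ∈ B | G.Adj v c})
    (hA : ∀ a ∈ A ∪ P', Fintype.card W ≤ #{c ∈ B' | G.Adj a c})
    (hB : ∀ b ∈ B, Fintype.card W ≤ #{c ∈ A | G.Adj b c})
    (hB'P : ∀ b ∈ B', ∃ c ∈ P', G.Adj b c) (hB' : B' ⊆ B)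
    (hvP : v ∉ P') (hAP : Disjoint A P') (hBP : Disjoint B P') :
    ∃ φ : F →g G, Function.Injective φ ∧ φ r = v ∧
      (∀ a, a ≠ r → x? ≠ some a → φ a ∈ A ∪ B) ∧ ∀ x₀, x? = some x₀ → φ x₀ ∈ P' := by
  obtain ⟨φ, hφ, hφr, hφT⟩ := hF.exists_injective_hom_of_greedyExtensible
    (greedyExtensible_shrubTarget hF hx hv hA hB hB'P hB' hvP hAP hBP)
    (by rw [shrubTarget, if_pos rfl]; exact mem_singleton_self v)
  refine ⟨φ, hφ, hφr, fun a har hax => shrubTarget_subset hB' har hax (hφT a), fun x₀ hx₀ => ?_⟩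
  have hx₀r : x₀ ≠ r := by rintro rfl; simpa using (hx _ hx₀).2
  simpa [shrubTarget, hx₀r, hx₀] using hφT x₀

end Shrub

/-- The factor `3` leaves room for two exceptional sets and the vertices already used. -/
lemma three_mul_le_of_le_sq_mul {ε d η N M : ℝ} (hε0 : 0 < ε) (hεd : 2 * ε ≤ d)
    (hd : d ≤ 1 / 3) (hε : ε < d ^ 2 * η / 8) (hN : 0 ≤ N) (hM : η * N ≤ M) :
    3 * ε * N ≤ (d - ε) * M := by
  have hη : 0 < η := by nlinarith
  have hdη : 12 * ε ≤ d * η / 2 := by nlinarith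
  have hM0 : 0 ≤ M := le_trans (by positivity) hM
  nlinarith [mul_le_mul_of_nonneg_left hM (by linarith : (0:ℝ) ≤ d / 2)]

theorem exists_shrub_embedding_of_card_lowDegreeVerts_le {W V : Type*} [Fintype W]
    [DecidableEq W] [DecidableEq V] {F : SimpleGraph W} (G : SimpleGraph V) [DecidableRel G.Adj]
    (hF : F.IsTree) {r : W} {x? : Option W} (hx : ∀ x ∈ x?, Even (F.dist r x) ∧ 4 ≤ F.dist r x)
    {X Y U P : Finset V} {v : V} {δ m : ℝ} (hP : P ⊆ X) (hUP : Disjoint U P) (hvP : v ∉ P)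
    (hδ : 0 < δ) (hm : Fintype.card W ≤ m) (hv : 2 * m ≤ #{c ∈ Y ∩ U | G.Adj v c})
    (hXU : 2 * m ≤ δ * #(X ∩ U)) (hYU : 3 * m ≤ δ * #(Y ∩ U)) (hPm : 2 * m ≤ #P)
    (hBX : #(G.lowDegreeVerts X (Y ∩ U) δ) ≤ m) (hBY : #(G.lowDegreeVerts Y (X ∩ U) δ) ≤ m)
    (hBP : #(G.lowDegreeVerts Y (P \ G.lowDegreeVerts X (Y ∩ U) δ) δ) ≤ m) :
    ∃ φ : F →g G, Function.Injective φ ∧ φ r = v ∧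
      (∀ a, a ≠ r → x? ≠ some a → φ a ∈ U) ∧ ∀ x₀, x? = some x₀ → φ x₀ ∈ P := by
  set BX := G.lowDegreeVerts X (Y ∩ U) δ
  set BY := G.lowDegreeVerts Y (X ∩ U) δ
  set P' := P \ BX
  set BP := G.lowDegreeVerts Y P' δ
  have hBYP : (#(BY ∪ BP) : ℝ) ≤ #BY + #BP := by exact_mod_cast card_union_le BY BP
  have hP'ne : P'.Nonempty := by
    have hP' : (#P : ℝ) ≤ #P' + #BX := by exact_mod_cast card_le_card_sdiff_add_card
    have : (1 : ℝ) ≤ Fintype.card W := Nat.one_le_cast.2 (Fintype.card_pos_iff.2 ⟨r⟩)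
    exact card_pos.1 ((Nat.cast_pos (α := ℝ)).1 (by linarith))
  have hv' : Fintype.card W ≤ #{c ∈ (Y ∩ U) \ BY | G.Adj v c} := by
    have : (#{c ∈ Y ∩ U | G.Adj v c} : ℝ) ≤ #{c ∈ (Y ∩ U) \ BY | G.Adj v c} + #BY := by
      exact_mod_cast card_filter_le_card_filter_sdiff_add_card (Y ∩ U) BY (G.Adj v)
    rw [← Nat.cast_le (α := ℝ)]
    linarith
  obtain ⟨φ, hφ, hφr, hφU, hφP⟩ := hF.exists_shrub_embedding (G := G) (x? := x?) (v := v)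
    (A := (X ∩ U) \ BX) (B := (Y ∩ U) \ BY) (B' := (Y ∩ U) \ (BY ∪ BP)) (P' := P') hx hv'
    (fun a ha => by
      rw [← union_sdiff_distrib, mem_sdiff, mem_union] at ha
      exact le_card_filter_adj_sdiff_of_notMem_lowDegreeVerts
        (ha.1.elim (fun h => (mem_inter.1 h).1) (fun h => hP h)) ha.2 (by linarith))
    (fun b hb => le_card_filter_adj_sdiff_of_notMem_lowDegreeVerts
      (mem_inter.1 (mem_sdiff.1 hb).1).1 (mem_sdiff.1 hb).2 (by linarith))
    (fun b hb => exists_adj_of_notMem_lowDegreeVerts (mem_inter.1 (mem_sdiff.1 hb).1).1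
      (fun h => (mem_sdiff.1 hb).2 (mem_union_right _ h)) hδ hP'ne)
    (sdiff_subset_sdiff subset_rfl subset_union_left) (fun h => hvP (sdiff_subset h))
    (hUP.mono (sdiff_subset.trans inter_subset_right) sdiff_subset)
    (hUP.mono (sdiff_subset.trans inter_subset_right) sdiff_subset)
  refine ⟨φ, hφ, hφr, fun a har hax => ?_, fun x₀ hx₀ => sdiff_subset (hφP x₀ hx₀)⟩
  rcases mem_union.1 (hφU a har hax) with h | h <;> exact (mem_inter.1 (mem_sdiff.1 h).1).2

theorem embed_shrub_general {V W : Type*} [DecidableEq V] [Fintype W]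
    (G : SimpleGraph V) [DecidableRel G.Adj]
    (ε d η : ℝ) (hεd : 2 * ε ≤ d) (hd : d ≤ 1 / 3) (hε : ε < d ^ 2 * η / 8)
    (F : SimpleGraph W) (hF : F.IsTree) (r : W) (x? : Option W)
    (hx : ∀ x ∈ x?, Even (F.dist r x) ∧ 4 ≤ F.dist r x)
    (X Y : Finset V)
    (hreg : G.IsUniform ε X Y) (hdens : d ≤ (G.edgeDensity X Y : ℝ))
    (hcard : X.card = Y.card)
    (U P : Finset V) (hP : P ⊆ X) (hUP : Disjoint U P)
    (v : V) (hvP : v ∉ P)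
    (h1 : η * X.card ≤ ((X ∩ U).card : ℝ))
    (h1' : η * X.card ≤ ((Y ∩ U).card : ℝ))
    (h2 : 2 * ε * X.card ≤ (P.card : ℝ))
    (h3 : 2 * ε * Y.card ≤ (((Y ∩ U).filter fun y => G.Adj v y).card : ℝ))
    (h4 : (Fintype.card W : ℝ) ≤ ε * X.card) :
    ∃ φ : F →g G, Function.Injective φ ∧ φ r = v ∧
      (∀ a : W, a ≠ r → x? ≠ some a → φ a ∈ U) ∧
      ∀ x₀ : W, x? = some x₀ → φ x₀ ∈ P := by
  classical
  have hε0 : 0 < ε := hreg.pos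
  have hYX : (#Y : ℝ) = #X := by exact_mod_cast hcard.symm
  have hXU := three_mul_le_of_le_sq_mul hε0 hεd hd hε (Nat.cast_nonneg _) h1
  have hYU := three_mul_le_of_le_sq_mul hε0 hεd hd hε (Nat.cast_nonneg _) h1'
  have hdens' : d ≤ (G.edgeDensity Y X : ℝ) := by rwa [edgeDensity_comm]
  have hm : 0 ≤ (#X : ℝ) * ε := by positivity
  set BX := G.lowDegreeVerts X (Y ∩ U) (d - ε)
  have hBX : (#BX : ℝ) ≤ #X * ε :=
    hreg.card_lowDegreeVerts_le inter_subset_left (by nlinarith) hdens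
  have hP' : (#X : ℝ) * ε ≤ #(P \ BX) := by
    have : (#P : ℝ) ≤ #(P \ BX) + #BX := by exact_mod_cast card_le_card_sdiff_add_card
    linarith
  rw [hYX] at h3
  exact exists_shrub_embedding_of_card_lowDegreeVerts_le G hF hx hP hUP hvP (by linarith)
    (m := #X * ε) (by linarith) (by linarith) (by linarith) (by linarith) (by linarith) hBX
    (hYX ▸ hreg.symm.card_lowDegreeVerts_le inter_subset_left (by nlinarith) hdens')
    (hYX ▸ hreg.symm.card_lowDegreeVerts_le (sdiff_subset.trans hP) (by linarith) hdens')

/-- Embedding a shrub in a regular pair.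
A rooted shrub is a tree `F` with a root `r` and an optional adventitious root `x?`
whose distance to `r` is even and at least 4. -/
theorem embed_shrub {V W : Type*} [Fintype V] [DecidableEq V] [Fintype W]
    (G : SimpleGraph V) [DecidableRel G.Adj]
    (ε d η : ℝ) (hεd : 2 * ε ≤ d) (hd : d ≤ 1 / 3) (hε : ε < d ^ 2 * η / 8)
    (F : SimpleGraph W) (hF : F.IsTree) (r : W) (x? : Option W)
    (hx : ∀ x ∈ x?, Even (F.dist r x) ∧ 4 ≤ F.dist r x)
    (X Y : Finset V) (hXY : Disjoint X Y)
    (hreg : G.IsUniform ε X Y) (hdens : d ≤ (G.edgeDensity X Y : ℝ))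
    (hcard : X.card = Y.card)
    (U P : Finset V) (hU : U ⊆ X ∪ Y) (hP : P ⊆ X) (hUP : Disjoint U P)
    (v : V) (hv : v ∈ X) (hvP : v ∉ P)
    (h1 : η * X.card ≤ ((X ∩ U).card : ℝ))
    (h1' : η * X.card ≤ ((Y ∩ U).card : ℝ))
    (h2 : 2 * ε * X.card ≤ (P.card : ℝ))
    (h3 : 2 * ε * Y.card ≤ (((Y ∩ U).filter fun y => G.Adj v y).card : ℝ))
    (h4 : (Fintype.card W : ℝ) ≤ ε * X.card) :
    ∃ φ : F →g G, Function.Injective φ ∧ φ r = v ∧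
      (∀ a : W, a ≠ r → x? ≠ some a → φ a ∈ U) ∧
      ∀ x₀ : W, x? = some x₀ → φ x₀ ∈ P :=
  embed_shrub_general G ε d η hεd hd hε F hF r x? hx X Y hreg hdens hcard U P hP hUP v hvP h1 h1' h2
    h3 h4
end
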